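/- arXiv:2503.06582 — 4 statements merged into one kernel-verified Lean document; each statement's English description precedes it below -/
import Mathlib

section
/- (Best response under intensity rationing, compete case.) Assume p₀ ≤ θ and p₀ ≤ p_M < p⋆, and let q_M ≥ θ − p₀ − 2·√((p_M − p₀)(θ − p_M)). Define the independent seller's demand D(p) = max(θ − p, 0) for p ≤ p_M and D(p) = max(θ − p − q_M, 0) for p > p_M, and their utility u(p) = ((1−α)p − c_I)·D(p). Then u(p_M) ≥ u(p) for all p ≥ 0; that is, matching the marketplace operator's price p_M is a best response (a de-monopolized outcome, since p_M < p⋆). -/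
/-!
Write `p₀ = c_I / (1 - α)`, so that `u(p) = (1 - α)(p - p₀) D(p)` and `u(p_M) = (1 - α) S²` with
`S² = (p_M - p₀)(θ - p_M)`. Below `p_M`, the profit `(p - p₀)(θ - p)` is a concave parabola whose
vertex `p⋆` lies to the right of `p_M`, so it is increasing there. Above `p_M`, the bound on `q_M`
gives `θ - p - q_M ≤ 2S - (p - p₀)`, and `x (2S - x) ≤ S²`.
-/

lemma sub_mul_sub_le_of_le_of_add_le {a b p q : ℝ} (hpq : p ≤ q) (hsum : p + q ≤ a + b) :
    (p - a) * (b - p) ≤ (q - a) * (b - q) := by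
  nlinarith [mul_nonneg (sub_nonneg.2 hpq) (sub_nonneg.2 hsum)]

lemma mul_sub_sub_le_sq {x d q s : ℝ} (hx : 0 ≤ x) (hq : d - 2 * s ≤ q) :
    x * (d - x - q) ≤ s ^ 2 :=
  calc x * (d - x - q) ≤ x * (2 * s - x) := mul_le_mul_of_nonneg_left (by linarith) hx
    _ ≤ s ^ 2 := by nlinarith [sq_nonneg (s - x)]

lemma mul_max_zero_le {x y c : ℝ} (hc : 0 ≤ c) (h : x * y ≤ c) : x * max y 0 ≤ c := by
  rcases le_total y 0 with hy | hy
  · simpa [max_eq_right hy] using hc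
  · rwa [max_eq_left hy]

theorem stmt_12_general (θ α cI pM qM : ℝ) (hα1 : α < 1)
    (hpM0 : cI / (1 - α) ≤ pM) (hpM1 : pM < (cI / (1 - α) + θ) / 2)
    (hqM : qM ≥ θ - cI / (1 - α)
        - 2 * Real.sqrt ((pM - cI / (1 - α)) * (θ - pM))) :
    ∀ p : ℝ, 0 ≤ p →
      (fun p' : ℝ => ((1 - α) * p' - cI)
          * (if p' ≤ pM then max (θ - p') 0 else max (θ - p' - qM) 0)) p
        ≤ (fun p' : ℝ => ((1 - α) * p' - cI)
          * (if p' ≤ pM then max (θ - p') 0 else max (θ - p' - qM) 0)) pM := by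
  intro p _
  have hβ : 0 < 1 - α := sub_pos.2 hα1
  set p₀ := cI / (1 - α) with hp₀
  have hmargin (x : ℝ) : (1 - α) * x - cI = (1 - α) * (x - p₀) := by
    rw [hp₀]; field_simp
  have hpMθ : pM ≤ θ := by linarith
  set S := Real.sqrt ((pM - p₀) * (θ - pM))
  have hS : (pM - p₀) * (θ - pM) = S ^ 2 :=
    (Real.sq_sqrt (mul_nonneg (sub_nonneg.2 hpM0) (sub_nonneg.2 hpMθ))).symm
  simp only [hmargin, if_pos le_rfl, max_eq_left (sub_nonneg.2 hpMθ), mul_assoc]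
  refine mul_le_mul_of_nonneg_left ?_ hβ.le
  rw [hS]
  split_ifs with hp
  · exact mul_max_zero_le (sq_nonneg S) (hS ▸ sub_mul_sub_le_of_le_of_add_le hp (by linarith))
  · have h := mul_sub_sub_le_sq (x := p - p₀) (d := θ - p₀) (by linarith) hqM
    exact mul_max_zero_le (sq_nonneg S) (by linarith)

/-- Best response under intensity rationing, compete case: For
`p₀ ≤ p_M < p⋆` and `q_M ≥ θ − p₀ − 2√((p_M − p₀)(θ − p_M))`, matching the
marketplace operator's price `p_M` maximizes the independent seller's utility
`u(p) = ((1−α)p − c_I)·D(p)`, where `D(p) = max(θ − p, 0)` for `p ≤ p_M` and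
`D(p) = max(θ − p − q_M, 0)` for `p > p_M`. -/
theorem stmt_12 (θ α cI pM qM : ℝ) (hθ : 0 < θ) (hα0 : 0 ≤ α) (hα1 : α < 1)
    (hcI : 0 ≤ cI) (hp0 : cI / (1 - α) ≤ θ)
    (hpM0 : cI / (1 - α) ≤ pM) (hpM1 : pM < (cI / (1 - α) + θ) / 2)
    (hqM : qM ≥ θ - cI / (1 - α)
        - 2 * Real.sqrt ((pM - cI / (1 - α)) * (θ - pM))) :
    ∀ p : ℝ, 0 ≤ p →
      (fun p' : ℝ => ((1 - α) * p' - cI)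
          * (if p' ≤ pM then max (θ - p') 0 else max (θ - p' - qM) 0)) p
        ≤ (fun p' : ℝ => ((1 - α) * p' - cI)
          * (if p' ≤ pM then max (θ - p') 0 else max (θ - p' - qM) 0)) pM :=
  stmt_12_general θ α cI pM qM hα1 hpM0 hpM1 hqM
end

section
/- (Best response under proportional rationing.) Assume p₀ < θ and p₀ ≤ p_M < p⋆, and let q_M satisfy 0 ≤ q_M ≤ θ − p_M. Define the independent seller's demand D(p) = max(θ − p, 0) for p ≤ p_M and D(p) = max(θ − p, 0)·(1 − q_M/(θ − p_M)) for p > p_M, and their utility u(p) = ((1−α)p − c_I)·D(p). Let q† = (θ − p_M)·(1 − ((p_M − p₀)(θ − p_M))/((p⋆ − p₀)(θ − p⋆))). Then: (i) if q_M ≥ q†, u(p_M) ≥ u(p) for all p ≥ 0 (competing at price p_M is a best response); (ii) if q_M < q†, u(p⋆) ≥ u(p) for all p ≥ 0 (waiting at the sole-seller price p⋆ is a best response). -/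
set_option maxHeartbeats 800000


/-- Best response under proportional rationing: For
`p₀ ≤ p_M < p⋆` and `0 ≤ q_M ≤ θ − p_M`, with demand `D(p) = max(θ − p, 0)`
for `p ≤ p_M` and `D(p) = max(θ − p, 0)·(1 − q_M/(θ − p_M))` for `p > p_M`,
and threshold `q† = (θ − p_M)(1 − ((p_M − p₀)(θ − p_M))/((p⋆ − p₀)(θ − p⋆)))`:
if `q_M ≥ q†` then competing at `p_M` is a best response, and if `q_M < q†`
then waiting at `p⋆` is a best response. -/
theorem stmt_14 (θ α cI pM qM : ℝ) (hθ : 0 < θ) (hα0 : 0 ≤ α) (hα1 : α < 1)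
    (hcI : 0 ≤ cI) (hp0 : cI / (1 - α) < θ)
    (hpM0 : cI / (1 - α) ≤ pM) (hpM1 : pM < (cI / (1 - α) + θ) / 2)
    (hqM0 : 0 ≤ qM) (hqM1 : qM ≤ θ - pM) :
    (qM ≥ (θ - pM) * (1 - ((pM - cI / (1 - α)) * (θ - pM))
          / (((cI / (1 - α) + θ) / 2 - cI / (1 - α))
              * (θ - (cI / (1 - α) + θ) / 2))) →
      ∀ p : ℝ, 0 ≤ p →
        (fun p' : ℝ => ((1 - α) * p' - cI)
            * (if p' ≤ pM then max (θ - p') 0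
              else max (θ - p') 0 * (1 - qM / (θ - pM)))) p
          ≤ (fun p' : ℝ => ((1 - α) * p' - cI)
            * (if p' ≤ pM then max (θ - p') 0
              else max (θ - p') 0 * (1 - qM / (θ - pM)))) pM)
    ∧ (qM < (θ - pM) * (1 - ((pM - cI / (1 - α)) * (θ - pM))
          / (((cI / (1 - α) + θ) / 2 - cI / (1 - α))
              * (θ - (cI / (1 - α) + θ) / 2))) →
      ∀ p : ℝ, 0 ≤ p →
        (fun p' : ℝ => ((1 - α) * p' - cI)
            * (if p' ≤ pM then max (θ - p') 0
              else max (θ - p') 0 * (1 - qM / (θ - pM)))) p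
          ≤ (fun p' : ℝ => ((1 - α) * p' - cI)
            * (if p' ≤ pM then max (θ - p') 0
              else max (θ - p') 0 * (1 - qM / (θ - pM))))
            ((cI / (1 - α) + θ) / 2)) := by
  have hA : (0:ℝ) < 1 - α := by linarith
  set p0 := cI / (1 - α) with hp0def
  set ps := (p0 + θ) / 2 with hpsdef
  have hcIeq : (1 - α) * p0 = cI := by
    rw [hp0def]; field_simp
  have hps1 : p0 < ps := by rw [hpsdef]; linarith
  have hps2 : ps < θ := by rw [hpsdef]; linarith
  have hθpM : 0 < θ - pM := by linarith
  have hfs : 0 < (ps - p0) * (θ - ps) := by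
    apply mul_pos <;> linarith
  have hβ0 : 0 ≤ 1 - qM / (θ - pM) := by
    rw [sub_nonneg, div_le_one hθpM]; exact hqM1
  have hβ1 : 1 - qM / (θ - pM) ≤ 1 := by
    have : 0 ≤ qM / (θ - pM) := div_nonneg hqM0 hθpM.le
    linarith
  have hpar : ∀ p : ℝ, (p - p0) * (θ - p) ≤ (ps - p0) * (θ - ps) := by
    intro p; rw [hpsdef]; nlinarith [sq_nonneg (p - (p0 + θ) / 2)]
  have hmono : ∀ p : ℝ, p ≤ pM → (p - p0) * (θ - p) ≤ (pM - p0) * (θ - pM) := by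
    intro p hp; nlinarith
  have hfpM : 0 ≤ (pM - p0) * (θ - pM) := by
    apply mul_nonneg <;> linarith
  constructor
  · intro hq p hp
    have hq' : 1 - (pM - p0) * (θ - pM) / ((ps - p0) * (θ - ps)) ≤ qM / (θ - pM) := by
      rw [le_div_iff₀ hθpM, mul_comm]
      exact hq
    have hkey : (1 - qM / (θ - pM)) * ((ps - p0) * (θ - ps)) ≤ (pM - p0) * (θ - pM) := by
      have h2 : (1 - qM / (θ - pM)) ≤ (pM - p0) * (θ - pM) / ((ps - p0) * (θ - ps)) := by
        linarith
      calc (1 - qM / (θ - pM)) * ((ps - p0) * (θ - ps))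
          ≤ ((pM - p0) * (θ - pM) / ((ps - p0) * (θ - ps))) * ((ps - p0) * (θ - ps)) :=
            mul_le_mul_of_nonneg_right h2 hfs.le
        _ = (pM - p0) * (θ - pM) := div_mul_cancel₀ _ hfs.ne'
    clear hq hq'
    simp only
    rw [if_pos le_rfl, max_eq_left hθpM.le, ← hcIeq]
    by_cases h : p ≤ pM
    · rw [if_pos h, max_eq_left (by linarith : (0:ℝ) ≤ θ - p)]
      linarith [mul_le_mul_of_nonneg_left (hmono p h) hA.le]
    · rw [if_neg h]
      push_neg at h
      by_cases hpθ : p < θ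
      · rw [max_eq_left (by linarith : (0:ℝ) ≤ θ - p)]
        linarith [mul_le_mul_of_nonneg_left
            (mul_le_mul_of_nonneg_right (hpar p) hβ0) hA.le,
          mul_le_mul_of_nonneg_left hkey hA.le]
      · rw [max_eq_right (by linarith : θ - p ≤ 0)]
        linarith [mul_nonneg hA.le hfpM]
  · intro hq p hp
    have hq' : qM / (θ - pM) ≤ 1 - (pM - p0) * (θ - pM) / ((ps - p0) * (θ - ps)) := by
      rw [div_le_iff₀ hθpM, mul_comm]
      exact hq.le
    have hkey : (pM - p0) * (θ - pM) ≤ (1 - qM / (θ - pM)) * ((ps - p0) * (θ - ps)) := by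
      have h2 : (pM - p0) * (θ - pM) / ((ps - p0) * (θ - ps)) ≤ 1 - qM / (θ - pM) := by
        linarith
      calc (pM - p0) * (θ - pM)
          = ((pM - p0) * (θ - pM) / ((ps - p0) * (θ - ps))) * ((ps - p0) * (θ - ps)) :=
            (div_mul_cancel₀ _ hfs.ne').symm
        _ ≤ (1 - qM / (θ - pM)) * ((ps - p0) * (θ - ps)) :=
            mul_le_mul_of_nonneg_right h2 hfs.le
    clear hq hq'
    simp only
    rw [if_neg (by push_neg; linarith : ¬ ps ≤ pM), max_eq_left (by linarith : (0:ℝ) ≤ θ - ps),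
      ← hcIeq]
    by_cases h : p ≤ pM
    · rw [if_pos h, max_eq_left (by linarith : (0:ℝ) ≤ θ - p)]
      linarith [mul_le_mul_of_nonneg_left (hmono p h) hA.le,
        mul_le_mul_of_nonneg_left hkey hA.le]
    · rw [if_neg h]
      push_neg at h
      by_cases hpθ : p < θ
      · rw [max_eq_left (by linarith : (0:ℝ) ≤ θ - p)]
        linarith [mul_le_mul_of_nonneg_left
          (mul_le_mul_of_nonneg_right (hpar p) hβ0) hA.le]
      · rw [max_eq_right (by linarith : θ - p ≤ 0)]
        linarith [mul_le_mul_of_nonneg_left hkey hA.le,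
          mul_nonneg hA.le hfpM]
end

section
/- (Surplus transfer, compete case.) Assume p₀ ≤ θ. Then for every price p with p₀ ≤ p ≤ p⋆, the sum of the independent seller's profit and consumer surplus when the good sells at price p with quantity θ − p is at least its value at the sole-seller price: ((1−α)p − c_I)·(θ − p) + (θ − p)²/2 ≥ ((1−α)p⋆ − c_I)·(θ − p⋆) + (θ − p⋆)²/2. -/
/-- Surplus transfer, compete case: For every price `p` with
`p₀ ≤ p ≤ p⋆`, the sum of the independent seller's profit and the consumer
surplus at price `p` (quantity `θ − p`) is at least its value at the
sole-seller price `p⋆`. -/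
theorem stmt_15 (θ α cI : ℝ) (hθ : 0 < θ) (hα0 : 0 ≤ α) (hα1 : α < 1)
    (hcI : 0 ≤ cI) (hp0 : cI / (1 - α) ≤ θ) :
    ∀ p : ℝ, cI / (1 - α) ≤ p → p ≤ (cI / (1 - α) + θ) / 2 →
      ((1 - α) * p - cI) * (θ - p) + (θ - p) ^ 2 / 2
        ≥ ((1 - α) * ((cI / (1 - α) + θ) / 2) - cI)
              * (θ - (cI / (1 - α) + θ) / 2)
            + (θ - (cI / (1 - α) + θ) / 2) ^ 2 / 2 := by
  intro p hp1 hp2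
  have hβ : (0:ℝ) < 1 - α := by linarith
  have hc : cI = (1 - α) * (cI / (1 - α)) := by field_simp
  set q := cI / (1 - α) with hq
  nlinarith [mul_nonneg (sub_nonneg.2 hp1) (sub_nonneg.2 hp2),
    mul_nonneg hα0 (mul_nonneg (sub_nonneg.2 hp2) (by linarith : (0:ℝ) ≤ θ - p)),
    mul_nonneg hβ.le (mul_nonneg (sub_nonneg.2 hp1) (sub_nonneg.2 hp2)),
    mul_nonneg hα0 (sq_nonneg ((q + θ)/2 - p))]
end

section
/- (Consumer surplus increases, abstain case.) Assume p₀ ≤ θ. Let p_M and q_M satisfy 0 ≤ p_M < p₀ and θ − p₀ ≤ q_M ≤ θ − p_M. Then the consumer surplus when the marketplace operator is the only seller, selling q_M units at price p_M, is at least the sole-seller consumer surplus of the independent seller: ∫₀^{q_M} (θ − t − p_M) dt ≥ (θ − p⋆)²/2, with strict inequality when p₀ < θ. -/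
/-- Consumer surplus increases, abstain case: For
`0 ≤ p_M < p₀` and `θ − p₀ ≤ q_M ≤ θ − p_M`, the consumer surplus when the
marketplace operator sells `q_M` units at price `p_M` is at least the
sole-seller consumer surplus `(θ − p⋆)²/2`, strictly when `p₀ < θ`. -/
theorem stmt_18 (θ α cI pM qM : ℝ) (hθ : 0 < θ) (hα0 : 0 ≤ α) (hα1 : α < 1)
    (hcI : 0 ≤ cI) (hp0 : cI / (1 - α) ≤ θ)
    (hpM0 : 0 ≤ pM) (hpM1 : pM < cI / (1 - α))
    (hqM0 : θ - cI / (1 - α) ≤ qM) (hqM1 : qM ≤ θ - pM) :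
    ((∫ t in (0:ℝ)..qM, (θ - t - pM)) ≥ (θ - (cI / (1 - α) + θ) / 2) ^ 2 / 2)
    ∧ (cI / (1 - α) < θ →
      (∫ t in (0:ℝ)..qM, (θ - t - pM)) > (θ - (cI / (1 - α) + θ) / 2) ^ 2 / 2) := by
  set p0 := cI / (1 - α) with hp0def
  have hint : (∫ t in (0:ℝ)..qM, (θ - t - pM)) = qM * (θ - pM) - qM ^ 2 / 2 := by
    have : (∫ t in (0:ℝ)..qM, (θ - t - pM))
        = (∫ t in (0:ℝ)..qM, ((θ - pM) - t)) := by
      congr 1; ext t; ring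
    rw [this, intervalIntegral.integral_sub (by simp) (by simp)]
    simp
    ring
  rw [hint]
  have hA : 0 ≤ θ - p0 := by linarith
  constructor
  · nlinarith [sq_nonneg (qM - (θ - p0)), mul_nonneg hA hA,
      mul_nonneg (sub_nonneg.2 hqM0) (sub_nonneg.2 hqM1)]
  · intro hlt
    have hA' : 0 < θ - p0 := by linarith
    nlinarith [mul_pos hA' hA', mul_nonneg (sub_nonneg.2 hqM0) (sub_nonneg.2 hqM1),
      mul_pos hA' (sub_pos.2 hpM1)]
end
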